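/- arXiv:1805.04984 — 2 statements merged into one kernel-verified Lean document; each statement's English description precedes it below -/
import Mathlib

section
/- Let α_1 < ... < α_n and 2 ≤ k ≤ n, and let z ≥ 0. There exists a k-partition (S_1,...,S_k) of V with max_i range(S_i) ≤ z if and only if the greedy interval procedure succeeds: setting j_0 = 0 and for each i ≥ 1 letting j_i be the largest index with α_{j_i} - α_{j_{i-1}+1} ≤ z, one obtains j_k = n. -/
open Finset

attribute [local instance] Classical.propDecidable

noncomputable def rng {n : ℕ} (α : Fin n → ℝ) (S : Finset (Fin n)) : ℝ :=
  if h : S.Nonempty then S.sup' h α - S.inf' h α else 0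

def IsPartition {n k : ℕ} (P : Fin k → Finset (Fin n)) : Prop :=
  (∀ i, (P i).Nonempty) ∧ (∀ i j, i ≠ j → Disjoint (P i) (P j)) ∧
    (∀ v : Fin n, ∃ i, v ∈ P i)

/-- `greedy α z i` is the number of elements (taken in increasing order of value) covered
after `i` steps of the greedy interval procedure: each step extends the current block
starting at element `greedy α z (i-1)` as far as possible while its range stays `≤ z`. -/
noncomputable def greedy {n : ℕ} (α : Fin n → ℝ) (z : ℝ) : ℕ → ℕ
  | 0 => 0
  | i + 1 =>
    let s := greedy α z i
    Nat.findGreatest (fun m =>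
      ∃ _hm : m ≤ n, ∃ _hs : s ≤ m, ∀ h : s < m,
        α ⟨m - 1, by omega⟩ - α ⟨s, by omega⟩ ≤ z) n

section aux
variable {n : ℕ} (α : Fin n → ℝ) (z : ℝ)

lemma greedy_le : ∀ i, greedy α z i ≤ n
  | 0 => Nat.zero_le n
  | _ + 1 => Nat.findGreatest_le n

lemma greedy_succ_eq (i : ℕ) : greedy α z (i+1) =
    Nat.findGreatest (fun m => ∃ _hm : m ≤ n, ∃ _hs : greedy α z i ≤ m,
      ∀ h : greedy α z i < m, α ⟨m-1, by omega⟩ - α ⟨greedy α z i, by omega⟩ ≤ z) n := rfl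

lemma greedy_le_succ (i : ℕ) : greedy α z i ≤ greedy α z (i+1) := by
  rw [greedy_succ_eq]
  exact Nat.le_findGreatest (greedy_le α z i)
    ⟨greedy_le α z i, le_refl _, fun hc => absurd hc (lt_irrefl _)⟩

lemma greedy_mono : Monotone (greedy α z) :=
  monotone_nat_of_le_succ (greedy_le_succ α z)

lemma greedy_lt_succ (hz : 0 ≤ z) (i : ℕ) (h : greedy α z i < n) :
    greedy α z i < greedy α z (i+1) := by
  rw [greedy_succ_eq]
  refine Nat.le_findGreatest h ⟨h, Nat.le_succ _, fun _ => ?_⟩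
  have : (⟨greedy α z i + 1 - 1, by omega⟩ : Fin n) = ⟨greedy α z i, by omega⟩ := by
    simp
  rw [this]; simpa using hz

lemma greedy_range (hα : StrictMono α) (i : ℕ) {m : ℕ} (h1 : greedy α z i < m) (h2 : m ≤ greedy α z (i+1)) :
    α ⟨m - 1, by have := greedy_le α z (i+1); omega⟩ -
      α ⟨greedy α z i, by have := greedy_le α z (i+1); omega⟩ ≤ z := by
  have hn1 := greedy_le α z (i+1)
  have hP := Nat.findGreatest_of_ne_zero (greedy_succ_eq α z i).symm (by omega)
  obtain ⟨hm, hs, hle⟩ := hP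
  have hgz := hle (by omega)
  have hmono : α ⟨m - 1, by omega⟩ ≤ α ⟨greedy α z (i+1) - 1, by omega⟩ := by
    apply hα.monotone
    exact Fin.mk_le_mk.mpr (by omega)
  linarith

lemma greedy_range' (hα : StrictMono α) (i : ℕ) (a b : Fin n)
    (ha : greedy α z i ≤ a.val) (hab : greedy α z i < greedy α z (i+1))
    (hb : b.val < greedy α z (i+1)) : α b - α a ≤ z := by
  have hn1 := greedy_le α z (i+1)
  have h1 : α ⟨greedy α z i, by omega⟩ ≤ α a := hα.monotone (by simp only [Fin.le_def, Fin.val_mk]; exact ha)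
  have h2 : α b ≤ α ⟨greedy α z (i+1) - 1, by omega⟩ := hα.monotone (by simp only [Fin.le_def, Fin.val_mk]; omega)
  have h3 := greedy_range α z hα i hab (le_refl _)
  linarith

lemma greedy_gap (i : ℕ) (h : greedy α z (i+1) < n) :
    z < α ⟨greedy α z (i+1), h⟩ - α ⟨greedy α z i, by have := greedy_le_succ α z i; omega⟩ := by
  have hs := greedy_le_succ α z i
  have hnP := Nat.findGreatest_is_greatest (P := fun m => ∃ _hm : m ≤ n,
      ∃ _hs : greedy α z i ≤ m, ∀ h : greedy α z i < m,
        α ⟨m-1, by omega⟩ - α ⟨greedy α z i, by omega⟩ ≤ z)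
    (n := n) (k := greedy α z (i+1) + 1) (by rw [← greedy_succ_eq]; omega) (by omega)
  by_contra hc
  push_neg at hc
  exact hnP ⟨by omega, by omega, fun _ => by simpa using hc⟩

lemma sub_le_rng {S : Finset (Fin n)} {a b : Fin n}
    (ha : a ∈ S) (hb : b ∈ S) : α b - α a ≤ rng α S := by
  have hS : S.Nonempty := ⟨a, ha⟩
  rw [rng, dif_pos hS]
  have h1 : α b ≤ S.sup' hS α := Finset.le_sup' α hb
  have h2 : S.inf' hS α ≤ α a := Finset.inf'_le α ha
  linarith

lemma rng_le {S : Finset (Fin n)} (hS : S.Nonempty) {x y : ℝ}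
    (hx : ∀ v ∈ S, x ≤ α v) (hy : ∀ v ∈ S, α v ≤ y) : rng α S ≤ y - x := by
  rw [rng, dif_pos hS]
  have h1 : S.sup' hS α ≤ y := Finset.sup'_le hS α hy
  have h2 : x ≤ S.inf' hS α := Finset.le_inf' hS α hx
  linarith

end aux

noncomputable def bnd {n : ℕ} (α : Fin n → ℝ) (z : ℝ) (k i : ℕ) : ℕ :=
  min (greedy α z i) (n - (k - i))

section bnd
variable {n k : ℕ} (α : Fin n → ℝ) (z : ℝ) (hz : 0 ≤ z) (hkn : k ≤ n)

lemma bnd_zero : bnd α z k 0 = 0 := by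
  have : greedy α z 0 = 0 := rfl
  simp [bnd, this]

lemma bnd_le (i : ℕ) : bnd α z k i ≤ n :=
  le_trans (min_le_left _ _) (greedy_le α z i)

lemma bnd_last (hgk : greedy α z k = n) : bnd α z k k = n := by
  simp [bnd, hgk]

include hz hkn in
lemma bnd_succ_lt {i : ℕ} (hi : i < k) : bnd α z k i < bnd α z k (i+1) := by
  have h1 := greedy_le α z i
  have h2 := greedy_le_succ α z i
  have h3 := greedy_le α z (i+1)
  rcases le_or_gt (greedy α z i) (n - (k - i)) with hc | hc
  · have := greedy_lt_succ α z hz i (by omega)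
    unfold bnd; omega
  · unfold bnd; omega

include hz hkn in
lemma bnd_mono {i j : ℕ} (hij : i ≤ j) (hj : j ≤ k) : bnd α z k i ≤ bnd α z k j := by
  induction j with
  | zero =>
    obtain rfl : i = 0 := Nat.le_zero.mp hij
    exact le_refl _
  | succ m ih =>
    rcases Nat.eq_or_lt_of_le hij with h | h
    · exact h ▸ le_refl _
    · have := bnd_succ_lt α z hz hkn (show m < k by omega)
      have := ih (by omega) (by omega)
      omega

include hz hkn in
lemma bnd_range (hα : StrictMono α) {i : ℕ} (hi : i < k) :
    α ⟨bnd α z k (i+1) - 1, by have h1 := bnd_le α z (i := i+1) (k := k); have h2 := bnd_succ_lt α z hz hkn hi; omega⟩ -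
      α ⟨bnd α z k i, by have h1 := bnd_le α z (i := i+1) (k := k); have h2 := bnd_succ_lt α z hz hkn hi; omega⟩ ≤ z := by
  have hlt := bnd_succ_lt α z hz hkn hi
  have hle1 := bnd_le α z (i := i+1) (k := k)
  rcases le_or_gt (greedy α z i) (n - (k - i)) with hc | hc
  · -- bnd i = greedy i
    have hbi : bnd α z k i = greedy α z i := by unfold bnd; omega
    apply greedy_range' α z hα i
    · simp only [Fin.val_mk]; omega
    · have : bnd α z k (i+1) ≤ greedy α z (i+1) := min_le_left _ _
      omega
    · have : bnd α z k (i+1) ≤ greedy α z (i+1) := min_le_left _ _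
      simp only [Fin.val_mk]; omega
  · -- singleton case : bnd (i+1) = bnd i + 1
    have hbi : bnd α z k i = n - (k - i) := by unfold bnd; omega
    have hs := greedy_le_succ α z i
    have heq : bnd α z k (i+1) = bnd α z k i + 1 := by unfold bnd; omega
    have hfe : (⟨bnd α z k (i+1) - 1, by omega⟩ : Fin n) = ⟨bnd α z k i, by omega⟩ := by
      apply Fin.ext; simp only [Fin.val_mk]; omega
    rw [hfe, sub_self]
    exact hz

end bnd

/-- There is a `k`-partition with all ranges at most `z ≥ 0` iff the greedy interval
procedure covers all `n` elements within `k` steps. -/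
theorem stmt12 (n : ℕ) (hn : 2 ≤ n) (α : Fin n → ℝ) (hα : StrictMono α)
    (k : ℕ) (hk : 2 ≤ k) (hkn : k ≤ n) (z : ℝ) (hz : 0 ≤ z) :
    (∃ P : Fin k → Finset (Fin n), IsPartition P ∧ ∀ i, rng α (P i) ≤ z) ↔
      greedy α z k = n := by
  constructor
  · rintro ⟨P, ⟨hne, hdisj, hcov⟩, hrng⟩
    by_contra hne'
    have hlt : greedy α z k < n := lt_of_le_of_ne (greedy_le α z k) hne'
    have hfn : ∀ i : Fin (k+1), greedy α z i.val < n := fun i =>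
      lt_of_le_of_lt (greedy_mono α z (Nat.lt_succ_iff.mp i.isLt)) hlt
    have key : ∀ i j : Fin (k+1), i < j →
        Classical.choose (hcov ⟨greedy α z i.val, hfn i⟩) ≠
          Classical.choose (hcov ⟨greedy α z j.val, hfn j⟩) := by
      intro i j hij hFij
      have hij' : (i : ℕ) < (j : ℕ) := Fin.lt_def.mp hij
      obtain ⟨t, ht⟩ : ∃ t, (j : ℕ) = t + 1 := ⟨(j:ℕ) - 1, by omega⟩
      have h2 : greedy α z (t+1) < n := by rw [← ht]; exact hfn j
      have hgap := greedy_gap α z t h2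
      have hmem1 := Classical.choose_spec (hcov ⟨greedy α z i.val, hfn i⟩)
      have hmem2 := Classical.choose_spec (hcov ⟨greedy α z j.val, hfn j⟩)
      rw [hFij] at hmem1
      have hsub := sub_le_rng α hmem1 hmem2
      have hr := hrng (Classical.choose (hcov ⟨greedy α z j.val, hfn j⟩))
      have hm : α (⟨greedy α z i.val, hfn i⟩ : Fin n) ≤
          α ⟨greedy α z t, by have := greedy_le_succ α z t; omega⟩ :=
        hα.monotone (Fin.mk_le_mk.mpr (greedy_mono α z (by omega)))
      have hj : α (⟨greedy α z j.val, hfn j⟩ : Fin n) = α ⟨greedy α z (t+1), h2⟩ := by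
        congr 1
        exact Fin.ext (by simp [ht])
      linarith
    have hinj : Function.Injective
        (fun i : Fin (k+1) => Classical.choose (hcov ⟨greedy α z i.val, hfn i⟩)) := by
      intro i j h
      by_contra hne2
      rcases lt_or_gt_of_ne hne2 with hlt2 | hlt2
      · exact key i j hlt2 h
      · exact key j i hlt2 h.symm
    have hcard := Fintype.card_le_of_injective _ hinj
    simp only [Fintype.card_fin] at hcard
    omega
  · intro hgk
    refine ⟨fun i => univ.filter (fun v =>
        bnd α z k i.val ≤ v.val ∧ v.val < bnd α z k (i.val+1)), ⟨?_, ?_, ?_⟩, ?_⟩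
    · intro i
      have h1 := bnd_succ_lt α z hz hkn i.isLt
      have h2 := bnd_le α z (i := i.val+1) (k := k)
      exact ⟨⟨bnd α z k i.val, by omega⟩, by
        simp only [Finset.mem_filter, Finset.mem_univ, true_and, Fin.val_mk]; omega⟩
    · intro i j hij
      rw [Finset.disjoint_left]
      intro v hvi hvj
      simp only [Finset.mem_filter, Finset.mem_univ, true_and] at hvi hvj
      rcases lt_or_gt_of_ne hij with h | h
      · have := bnd_mono α z hz hkn (show i.val + 1 ≤ j.val from Fin.lt_def.mp h) j.isLt.le
        omega
      · have := bnd_mono α z hz hkn (show j.val + 1 ≤ i.val from Fin.lt_def.mp h) i.isLt.le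
        omega
    · intro v
      obtain ⟨j, hjdef⟩ : ∃ j, j = Nat.findGreatest (fun i => bnd α z k i ≤ v.val) k := ⟨_, rfl⟩
      have hjk : j ≤ k := hjdef ▸ Nat.findGreatest_le k
      have hbj : bnd α z k j ≤ v.val := by
        rcases Nat.eq_zero_or_pos j with h0 | h0
        · rw [h0, bnd_zero]; omega
        · exact Nat.findGreatest_of_ne_zero (P := fun i => bnd α z k i ≤ v.val) hjdef.symm (by omega)
      have hjlt : j < k := by
        rcases Nat.eq_or_lt_of_le hjk with h | h
        · exfalso; rw [h, bnd_last α z hgk] at hbj; omega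
        · exact h
      have hup : v.val < bnd α z k (j+1) := by
        have := Nat.findGreatest_is_greatest (P := fun i => bnd α z k i ≤ v.val) (n := k)
          (k := j+1) (by rw [← hjdef]; omega) (by omega)
        omega
      exact ⟨⟨j, hjlt⟩, by
        simp only [Finset.mem_filter, Finset.mem_univ, true_and, Fin.val_mk]
        exact ⟨hbj, hup⟩⟩
    · intro i
      have hlt := bnd_succ_lt α z hz hkn i.isLt
      have hleN := bnd_le α z (i := i.val+1) (k := k)
      have hr := bnd_range α z hz hkn hα i.isLt
      refine le_trans (rng_le α ?_ ?_ ?_) hr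
      · exact ⟨⟨bnd α z k i.val, by omega⟩, by
          simp only [Finset.mem_filter, Finset.mem_univ, true_and, Fin.val_mk]; omega⟩
      · intro u hu
        simp only [Finset.mem_filter, Finset.mem_univ, true_and] at hu
        exact hα.monotone (by simp only [Fin.le_def, Fin.val_mk]; omega)
      · intro u hu
        simp only [Finset.mem_filter, Finset.mem_univ, true_and] at hu
        exact hα.monotone (by simp only [Fin.le_def, Fin.val_mk]; omega)
end

section
/- Let f : ℕ → ℝ be positive and non-decreasing and α_1 < ... < α_n (n ≥ 2), 2 ≤ k ≤ n. There is an optimal k-partition (S_1,...,S_k) minimizing Σ_i range(S_i)/f(|S_i|) in which the sets are non-overlapping in values: for some indexing, max(S_i) < min(S_{i+1}) for all i = 1,...,k-1. -/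
open Finset

/-!
Among all optimal partitions take one whose total unnormalized range `∑ range(Sᵢ)` is least.
If two of its parts `A`, `B` interleave, say `min A < min B < max A`, they can be replaced by two
parts that cost no more and have strictly smaller total range. When `max A < max B`, swap
`min B` and `max A`: sizes are kept, `range A` drops and `range B` does not grow. When
`max B < max A`, split `A ∪ B` into `{min A}` and the rest: the rest has range less than
`range A` and, `f` being monotone, a larger normaliser. So the chosen partition is pairwise
separated, and sorting its parts by their minima gives the required indexing.
-/

open Function

variable {n : ℕ}

section Range

variable {α : Fin n → ℝ} {S : Finset (Fin n)} {lo hi : Fin n}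

lemma rng_of_nonempty (α : Fin n → ℝ) (h : S.Nonempty) : rng α S = S.sup' h α - S.inf' h α :=
  dif_pos h

lemma rng_nonneg (α : Fin n → ℝ) (S : Finset (Fin n)) : 0 ≤ rng α S := by
  rcases S.eq_empty_or_nonempty with rfl | h
  · simp [rng]
  · obtain ⟨a, ha⟩ := h
    rw [rng_of_nonempty α ⟨a, ha⟩, sub_nonneg]
    exact (inf'_le α ha).trans (le_sup' α ha)

lemma rng_singleton (α : Fin n → ℝ) (a : Fin n) : rng α {a} = 0 := by
  simp [rng]

lemma rng_eq_of_subset_Icc (hα : Monotone α) (hlo : lo ∈ S) (hhi : hi ∈ S)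
    (hS : S ⊆ Icc lo hi) : rng α S = α hi - α lo := by
  have hne : S.Nonempty := ⟨lo, hlo⟩
  rw [rng_of_nonempty α hne]
  congr 1
  · exact le_antisymm (sup'_le hne α fun s hs => hα (mem_Icc.1 (hS hs)).2) (le_sup' α hhi)
  · exact le_antisymm (inf'_le α hlo) (le_inf' hne α fun s hs => hα (mem_Icc.1 (hS hs)).1)

lemma rng_le_of_subset_Icc (hα : Monotone α) (hne : S.Nonempty) (hS : S ⊆ Icc lo hi) :
    rng α S ≤ α hi - α lo := by
  rw [rng_of_nonempty α hne]
  gcongr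
  · exact sup'_le hne α fun s hs => hα (mem_Icc.1 (hS hs)).2
  · exact le_inf' hne α fun s hs => hα (mem_Icc.1 (hS hs)).1

lemma rng_lt_of_subset_Ico (hα : StrictMono α) (hne : S.Nonempty) (hS : S ⊆ Ico lo hi) :
    rng α S < α hi - α lo := by
  have hsup : S.sup' hne α < α hi := (sup'_lt_iff hne).2 fun s hs => hα (mem_Ico.1 (hS hs)).2
  have hinf : α lo ≤ S.inf' hne α := le_inf' hne α fun s hs => hα.monotone (mem_Ico.1 (hS hs)).1
  rw [rng_of_nonempty α hne]
  linarith

lemma rng_lt_of_subset_Ioc (hα : StrictMono α) (hne : S.Nonempty) (hS : S ⊆ Ioc lo hi) :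
    rng α S < α hi - α lo := by
  have hsup : S.sup' hne α ≤ α hi := sup'_le hne α fun s hs => hα.monotone (mem_Ioc.1 (hS hs)).2
  have hinf : α lo < S.inf' hne α := (lt_inf'_iff hne).2 fun s hs => hα (mem_Ioc.1 (hS hs)).1
  rw [rng_of_nonempty α hne]
  linarith

end Range

lemma sum_comp_update_update {ι β M : Type*} [Fintype ι] [DecidableEq ι] [AddCommMonoid M]
    (g : β → M) (Q : ι → β) {i j : ι} (hij : i ≠ j) (x y : β) :
    ∑ t, g (update (update Q i x) j y t) + (g (Q i) + g (Q j)) = ∑ t, g (Q t) + (g x + g y) := by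
  have hi : i ∈ univ.erase j := mem_erase.2 ⟨hij, mem_univ i⟩
  rw [← add_sum_erase _ _ (mem_univ j), ← add_sum_erase _ _ hi,
    ← add_sum_erase _ (fun t => g (Q t)) (mem_univ j), ← add_sum_erase _ (fun t => g (Q t)) hi,
    sum_congr rfl fun t ht => by
      rw [update_of_ne (ne_of_mem_erase (mem_of_mem_erase ht)), update_of_ne (ne_of_mem_erase ht)]]
  simp only [update_self, update_of_ne hij]
  abel

section Partition

variable {k : ℕ}

lemma isPartition_fibers (c : Fin n → Fin k) (hc : Surjective c) :
    IsPartition fun i => univ.filter (c · = i) := by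
  refine ⟨fun i => ?_, fun i j hij => ?_, fun v => ⟨c v, by simp⟩⟩
  · obtain ⟨v, rfl⟩ := hc i
    exact ⟨v, by simp⟩
  · rw [disjoint_filter]
    rintro v - rfl
    exact hij

lemma exists_isPartition (hk : 0 < k) (hkn : k ≤ n) :
    ∃ P : Fin k → Finset (Fin n), IsPartition P :=
  haveI : Nonempty (Fin k) := ⟨⟨0, hk⟩⟩
  ⟨_, isPartition_fibers _ (invFun_surjective (Fin.castLE_injective hkn))⟩

lemma IsPartition.comp_equiv {P : Fin k → Finset (Fin n)} (hP : IsPartition P)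
    (σ : Equiv.Perm (Fin k)) : IsPartition (P ∘ σ) := by
  refine ⟨fun i => hP.1 (σ i), fun i j hij => hP.2.1 _ _ (σ.injective.ne hij), fun v => ?_⟩
  obtain ⟨i, hi⟩ := hP.2.2 v
  exact ⟨σ.symm i, by simpa using hi⟩

lemma IsPartition.update_update {Q : Fin k → Finset (Fin n)} (hQ : IsPartition Q) {i j : Fin k}
    (hij : i ≠ j) {C D : Finset (Fin n)} (hC : C.Nonempty) (hD : D.Nonempty)
    (hCD : Disjoint C D) (hU : C ∪ D = Q i ∪ Q j) :
    IsPartition (update (update Q i C) j D) := by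
  have hCU : C ⊆ Q i ∪ Q j := hU ▸ subset_union_left
  have hDU : D ⊆ Q i ∪ Q j := hU ▸ subset_union_right
  have hrest : ∀ t, t ≠ i → t ≠ j → Disjoint (Q i ∪ Q j) (Q t) := fun t hti htj =>
    disjoint_union_left.2 ⟨hQ.2.1 i t hti.symm, hQ.2.1 j t htj.symm⟩
  refine ⟨fun t => ?_, fun s t hst => ?_, fun v => ?_⟩
  · simp only [update_apply]
    split_ifs
    exacts [hD, hC, hQ.1 t]
  · simp only [update_apply]
    split_ifs <;> subst_vars
    all_goals first
      | exact absurd rfl hst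
      | exact hCD | exact hCD.symm | exact hQ.2.1 s t hst
      | exact (hrest _ ‹_› ‹_›).mono_left ‹_›
      | exact ((hrest _ ‹_› ‹_›).mono_left ‹_›).symm
  · by_cases hv : v ∈ Q i ∪ Q j
    · rcases mem_union.1 (hU ▸ hv : v ∈ C ∪ D) with hvC | hvD
      · exact ⟨i, by simpa [update_apply, hij] using hvC⟩
      · exact ⟨j, by simpa using hvD⟩
    · obtain ⟨t, ht⟩ := hQ.2.2 v
      have hti : t ≠ i := by rintro rfl; exact hv (mem_union_left _ ht)
      have htj : t ≠ j := by rintro rfl; exact hv (mem_union_right _ ht)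
      exact ⟨t, by simpa [update_apply, hti, htj] using ht⟩

end Partition

section Exchange

variable {α : Fin n → ℝ} {f : ℕ → ℝ} {A B C D : Finset (Fin n)}

structure IsImprovement (α : Fin n → ℝ) (f : ℕ → ℝ) (A B C D : Finset (Fin n)) : Prop where
  nonempty_left : C.Nonempty
  nonempty_right : D.Nonempty
  disjoint : Disjoint C D
  union_eq : C ∪ D = A ∪ B
  cost_le : rng α C / f C.card + rng α D / f D.card ≤ rng α A / f A.card + rng α B / f B.card
  rng_lt : rng α C + rng α D < rng α A + rng α B

lemma IsImprovement.symm (h : IsImprovement α f A B C D) : IsImprovement α f B A D C where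
  nonempty_left := h.nonempty_right
  nonempty_right := h.nonempty_left
  disjoint := h.disjoint.symm
  union_eq := by rw [union_comm, h.union_eq, union_comm]
  cost_le := by linarith [h.cost_le]
  rng_lt := by linarith [h.rng_lt]

lemma isImprovement_of_overlap (hα : StrictMono α) (hf : ∀ m, 0 < m → 0 < f m)
    (hAB : Disjoint A B) {a₀ a₁ b₀ b₁ : Fin n} (ha₀ : a₀ ∈ A) (ha₁ : a₁ ∈ A) (hb₀ : b₀ ∈ B)
    (hb₁ : b₁ ∈ B) (hA : A ⊆ Icc a₀ a₁) (hB : B ⊆ Icc b₀ b₁)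
    (h₀ : a₀ < b₀) (h₁ : b₀ < a₁) (h₂ : a₁ < b₁) :
    IsImprovement α f A B (insert b₀ (A.erase a₁)) (insert a₁ (B.erase b₀)) := by
  have hb₀A : b₀ ∉ A := disjoint_right.1 hAB hb₀
  have ha₁B : a₁ ∉ B := disjoint_left.1 hAB ha₁
  have hcardC : (insert b₀ (A.erase a₁)).card = A.card := by
    rw [card_insert_of_notMem fun h => hb₀A (mem_of_mem_erase h), card_erase_add_one ha₁]
  have hcardD : (insert a₁ (B.erase b₀)).card = B.card := by
    rw [card_insert_of_notMem fun h => ha₁B (mem_of_mem_erase h), card_erase_add_one hb₀]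
  have hC : insert b₀ (A.erase a₁) ⊆ Ico a₀ a₁ := by
    refine insert_subset (mem_Ico.2 ⟨h₀.le, h₁⟩) fun x hx => ?_
    obtain ⟨hx₀, hx₁⟩ := mem_Icc.1 (hA (mem_of_mem_erase hx))
    exact mem_Ico.2 ⟨hx₀, lt_of_le_of_ne hx₁ (ne_of_mem_erase hx)⟩
  have hD : insert a₁ (B.erase b₀) ⊆ Icc b₀ b₁ :=
    insert_subset (mem_Icc.2 ⟨h₁.le, h₂.le⟩) ((erase_subset _ _).trans hB)
  have hrngC : rng α (insert b₀ (A.erase a₁)) < rng α A :=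
    rng_eq_of_subset_Icc hα.monotone ha₀ ha₁ hA ▸ rng_lt_of_subset_Ico hα (insert_nonempty _ _) hC
  have hrngD : rng α (insert a₁ (B.erase b₀)) ≤ rng α B :=
    rng_eq_of_subset_Icc hα.monotone hb₀ hb₁ hB ▸
      rng_le_of_subset_Icc hα.monotone (insert_nonempty _ _) hD
  refine ⟨insert_nonempty _ _, insert_nonempty _ _, ?_, ?_, ?_, by linarith⟩
  · simp only [disjoint_insert_left, disjoint_insert_right, mem_insert, mem_erase]
    grind [disjoint_left]
  · ext x
    simp only [mem_union, mem_insert, mem_erase]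
    grind
  · rw [hcardC, hcardD]
    exact add_le_add (div_le_div_of_nonneg_right hrngC.le (hf _ (card_pos.2 ⟨a₀, ha₀⟩)).le)
      (div_le_div_of_nonneg_right hrngD (hf _ (card_pos.2 ⟨b₀, hb₀⟩)).le)

lemma isImprovement_of_nested (hα : StrictMono α) (hf : ∀ m, 0 < m → 0 < f m)
    (hfmono : Monotone f) (hAB : Disjoint A B) (hB : B.Nonempty) {a₀ a₁ : Fin n}
    (ha₀ : a₀ ∈ A) (ha₁ : a₁ ∈ A) (hA : A ⊆ Icc a₀ a₁) (hBA : B ⊆ Ioo a₀ a₁) :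
    IsImprovement α f A B {a₀} ((A ∪ B).erase a₀) := by
  obtain ⟨b, hb⟩ := hB
  have h₀₁ : a₀ < a₁ := (mem_Ioo.1 (hBA hb)).1.trans (mem_Ioo.1 (hBA hb)).2
  have hD : (A ∪ B).erase a₀ ⊆ Ioc a₀ a₁ := by
    intro x hx
    rcases mem_union.1 (mem_of_mem_erase hx) with h | h
    · obtain ⟨hx₀, hx₁⟩ := mem_Icc.1 (hA h)
      exact mem_Ioc.2 ⟨lt_of_le_of_ne hx₀ (ne_of_mem_erase hx).symm, hx₁⟩
    · exact Ioo_subset_Ioc_self (hBA h)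
  have hDne : ((A ∪ B).erase a₀).Nonempty := ⟨a₁, mem_erase.2 ⟨h₀₁.ne', mem_union_left _ ha₁⟩⟩
  have hcard : A.card ≤ ((A ∪ B).erase a₀).card := by
    have := card_pos.2 ⟨b, hb⟩
    rw [card_erase_of_mem (mem_union_left _ ha₀), card_union_of_disjoint hAB]
    omega
  have hrngD : rng α ((A ∪ B).erase a₀) < rng α A :=
    rng_eq_of_subset_Icc hα.monotone ha₀ ha₁ hA ▸ rng_lt_of_subset_Ioc hα hDne hD
  refine ⟨singleton_nonempty _, hDne, disjoint_singleton_left.2 (notMem_erase _ _),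
    by rw [← insert_eq, insert_erase (mem_union_left _ ha₀)], ?_, ?_⟩
  · have hDA : rng α ((A ∪ B).erase a₀) / f ((A ∪ B).erase a₀).card ≤ rng α A / f A.card :=
      div_le_div₀ (rng_nonneg _ _) hrngD.le (hf _ (card_pos.2 ⟨a₀, ha₀⟩)) (hfmono hcard)
    have hB : 0 ≤ rng α B / f B.card := div_nonneg (rng_nonneg _ _) (hf _ (card_pos.2 ⟨b, hb⟩)).le
    rw [rng_singleton, zero_div]
    linarith
  · rw [rng_singleton]
    linarith [rng_nonneg α B]

end Exchange

def Precedes (A B : Finset (Fin n)) : Prop :=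
  ∀ a ∈ A, ∀ b ∈ B, a < b

def Separated (A B : Finset (Fin n)) : Prop :=
  Precedes A B ∨ Precedes B A

section Improvement

variable {α : Fin n → ℝ} {f : ℕ → ℝ} {A B : Finset (Fin n)}

lemma exists_isImprovement_of_min'_lt (hα : StrictMono α) (hf : ∀ m, 0 < m → 0 < f m)
    (hfmono : Monotone f) (hAB : Disjoint A B) (hA : A.Nonempty) (hB : B.Nonempty)
    (h₀ : A.min' hA < B.min' hB) (h₁ : B.min' hB < A.max' hA) :
    ∃ C D, IsImprovement α f A B C D := by
  have hAI : A ⊆ Icc (A.min' hA) (A.max' hA) := fun x hx =>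
    mem_Icc.2 ⟨min'_le A x hx, le_max' A x hx⟩
  have hBI : B ⊆ Icc (B.min' hB) (B.max' hB) := fun x hx =>
    mem_Icc.2 ⟨min'_le B x hx, le_max' B x hx⟩
  have hmax : A.max' hA ≠ B.max' hB := fun h =>
    disjoint_left.1 hAB (max'_mem A hA) (h ▸ max'_mem B hB)
  rcases hmax.lt_or_gt with h₂ | h₂
  · exact ⟨_, _, isImprovement_of_overlap hα hf hAB (min'_mem A hA) (max'_mem A hA)
      (min'_mem B hB) (max'_mem B hB) hAI hBI h₀ h₁ h₂⟩
  · exact ⟨_, _, isImprovement_of_nested hα hf hfmono hAB hB (min'_mem A hA) (max'_mem A hA) hAI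
      fun x hx => mem_Ioo.2 ⟨h₀.trans_le (min'_le B x hx), (le_max' B x hx).trans_lt h₂⟩⟩

lemma exists_isImprovement_of_not_separated (hα : StrictMono α) (hf : ∀ m, 0 < m → 0 < f m)
    (hfmono : Monotone f) (hAB : Disjoint A B) (hA : A.Nonempty) (hB : B.Nonempty)
    (h : ¬ Separated A B) : ∃ C D, IsImprovement α f A B C D := by
  simp only [Separated, Precedes, not_or, not_forall, not_lt] at h
  obtain ⟨⟨a, ha, b, hb, hba⟩, ⟨b', hb', a', ha', hab'⟩⟩ := h
  have hne : ∀ {x y}, x ∈ A → y ∈ B → x ≠ y := fun hx hy hxy =>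
    disjoint_left.1 hAB hx (hxy ▸ hy)
  rcases (hne (min'_mem A hA) (min'_mem B hB)).lt_or_gt with h₀ | h₀
  · refine exists_isImprovement_of_min'_lt hα hf hfmono hAB hA hB h₀ ?_
    calc B.min' hB ≤ b := min'_le B b hb
      _ < a := lt_of_le_of_ne hba (hne ha hb).symm
      _ ≤ A.max' hA := le_max' A a ha
  · obtain ⟨C, D, h⟩ := exists_isImprovement_of_min'_lt hα hf hfmono hAB.symm hB hA h₀ <|
      calc A.min' hA ≤ a' := min'_le A a' ha'
        _ < b' := lt_of_le_of_ne hab' (hne ha' hb')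
        _ ≤ B.max' hB := le_max' B b' hb'
    exact ⟨D, C, h.symm⟩

end Improvement

section Optimal

variable {k : ℕ} {α : Fin n → ℝ} {f : ℕ → ℝ}

noncomputable def normRangeSum (α : Fin n → ℝ) (f : ℕ → ℝ) (Q : Fin k → Finset (Fin n)) : ℝ :=
  ∑ i, rng α (Q i) / f (Q i).card

noncomputable def totalRange (α : Fin n → ℝ) (Q : Fin k → Finset (Fin n)) : ℝ :=
  ∑ i, rng α (Q i)

lemma IsPartition.exists_better_of_not_separated (hα : StrictMono α)
    (hf : ∀ m, 0 < m → 0 < f m) (hfmono : Monotone f) {Q : Fin k → Finset (Fin n)}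
    (hQ : IsPartition Q) (h : ¬ Pairwise fun i j => Separated (Q i) (Q j)) :
    ∃ Q' : Fin k → Finset (Fin n), IsPartition Q' ∧ normRangeSum α f Q' ≤ normRangeSum α f Q ∧
      totalRange α Q' < totalRange α Q := by
  obtain ⟨i, j, hij, hsep⟩ : ∃ i j, i ≠ j ∧ ¬ Separated (Q i) (Q j) := by
    simpa [Pairwise] using h
  obtain ⟨C, D, hCD⟩ := exists_isImprovement_of_not_separated hα hf hfmono (hQ.2.1 i j hij)
    (hQ.1 i) (hQ.1 j) hsep
  refine ⟨update (update Q i C) j D, hQ.update_update hij hCD.nonempty_left hCD.nonempty_right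
    hCD.disjoint hCD.union_eq, ?_, ?_⟩
  · have := sum_comp_update_update (fun S => rng α S / f S.card) Q hij C D
    unfold normRangeSum
    linarith [hCD.cost_le]
  · have := sum_comp_update_update (rng α) Q hij C D
    unfold totalRange
    linarith [hCD.rng_lt]

lemma exists_optimal_pairwise_separated (hα : StrictMono α) (hf : ∀ m, 0 < m → 0 < f m)
    (hfmono : Monotone f) (hpart : ∃ P : Fin k → Finset (Fin n), IsPartition P) :
    ∃ P : Fin k → Finset (Fin n), IsPartition P ∧ (Pairwise fun i j => Separated (P i) (P j)) ∧
      ∀ Q : Fin k → Finset (Fin n), IsPartition Q → normRangeSum α f P ≤ normRangeSum α f Q := by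
  classical
  obtain ⟨P₀, hP₀⟩ := hpart
  obtain ⟨P, hPmem, hPmin⟩ := (univ.filter IsPartition).exists_min_image
    (fun Q => toLex (normRangeSum α f Q, totalRange α Q)) ⟨P₀, mem_filter.2 ⟨mem_univ _, hP₀⟩⟩
  have hP : IsPartition P := (mem_filter.1 hPmem).2
  have hle (Q) (hQ : IsPartition Q) :=
    Prod.Lex.toLex_le_toLex.1 (hPmin Q (mem_filter.2 ⟨mem_univ _, hQ⟩))
  refine ⟨P, hP, by_contra fun hsep => ?_, fun Q hQ => ?_⟩
  · obtain ⟨Q, hQ, hcost, hrng⟩ := hP.exists_better_of_not_separated hα hf hfmono hsep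
    rcases hle Q hQ with h | ⟨h, h'⟩ <;> linarith
  · rcases hle Q hQ with h | ⟨h, -⟩
    exacts [h.le, h.le]

end Optimal

lemma exists_perm_precedes {k : ℕ} {P : Fin k → Finset (Fin n)} (hne : ∀ i, (P i).Nonempty)
    (hsep : Pairwise fun i j => Separated (P i) (P j)) :
    ∃ σ : Equiv.Perm (Fin k), ∀ i j, i < j → Precedes (P (σ i)) (P (σ j)) := by
  set g : Fin k → Fin n := fun i => (P i).min' (hne i)
  have hg : Injective g := fun i j hgij => by
    by_contra hij
    rcases hsep hij with h | h
    · exact (h _ (min'_mem _ _) _ (min'_mem _ _)).ne hgij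
    · exact (h _ (min'_mem _ _) _ (min'_mem _ _)).ne hgij.symm
  have hsorted : StrictMono (g ∘ Tuple.sort g) :=
    (Tuple.monotone_sort g).strictMono_of_injective (hg.comp (Tuple.sort g).injective)
  refine ⟨Tuple.sort g, fun i j hij => ?_⟩
  rcases hsep ((Tuple.sort g).injective.ne hij.ne) with h | h
  · exact h
  · exact absurd (h _ (min'_mem _ _) _ (min'_mem _ _)) (hsorted hij).asymm

theorem stmt15_general (n : ℕ) (α : Fin n → ℝ) (hα : StrictMono α)
    (f : ℕ → ℝ) (hfpos : ∀ m : ℕ, 0 < m → 0 < f m) (hfmono : Monotone f)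
    (k : ℕ) (hk : 2 ≤ k) (hkn : k ≤ n) :
    ∃ P : Fin k → Finset (Fin n), IsPartition P ∧
      (∀ i : Fin k, ∀ h : i.val + 1 < k,
        ∀ a ∈ P i, ∀ b ∈ P ⟨i.val + 1, h⟩, α a < α b) ∧
      ∀ Q : Fin k → Finset (Fin n), IsPartition Q →
        ∑ i, rng α (P i) / f (P i).card ≤ ∑ i, rng α (Q i) / f (Q i).card := by
  obtain ⟨P, hP, hsep, hopt⟩ := exists_optimal_pairwise_separated hα hfpos hfmono
    (exists_isPartition (by omega) hkn)
  obtain ⟨σ, hσ⟩ := exists_perm_precedes hP.1 hsep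
  refine ⟨P ∘ σ, hP.comp_equiv σ,
    fun i h a ha b hb => hα (hσ _ _ (Fin.lt_def.2 (by simp)) a ha b hb), fun Q hQ => ?_⟩
  calc ∑ i, rng α (P (σ i)) / f (P (σ i)).card = normRangeSum α f P :=
        Equiv.sum_comp σ fun i => rng α (P i) / f (P i).card
    _ ≤ _ := hopt Q hQ

/-- There is an optimal `k`-partition for the min `k`-normalized range sum problem whose
sets are non-overlapping in values: `max(Sᵢ) < min(Sᵢ₊₁)` for all `i`. -/
theorem stmt15 (n : ℕ) (hn : 2 ≤ n) (α : Fin n → ℝ) (hα : StrictMono α)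
    (f : ℕ → ℝ) (hfpos : ∀ m : ℕ, 0 < m → 0 < f m) (hfmono : Monotone f)
    (k : ℕ) (hk : 2 ≤ k) (hkn : k ≤ n) :
    ∃ P : Fin k → Finset (Fin n), IsPartition P ∧
      (∀ i : Fin k, ∀ h : i.val + 1 < k,
        ∀ a ∈ P i, ∀ b ∈ P ⟨i.val + 1, h⟩, α a < α b) ∧
      ∀ Q : Fin k → Finset (Fin n), IsPartition Q →
        ∑ i, rng α (P i) / f (P i).card ≤ ∑ i, rng α (Q i) / f (Q i).card :=
  stmt15_general n α hα f hfpos hfmono k hk hkn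
end
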